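/- Lower tail bound for the hypergeometric distribution: Pr[i ≤ E[i] − t·n] ≤ exp(−2t²n), obtained from the upper tail bound via the color-flip symmetry h(M,N,n,i) = h(N−M,N,n,n−i). -/

import Mathlib

/-!
Chernoff's method with `e^{-4t}` as the weight: the tail is at most `e^{4t(np - tn)} E[e^{-4t i}]`,
where `p = M/N`. For `s ≥ 0` the generating function `E[sⁱ]` of the hypergeometric law is at most
the binomial one `(1 - p + p s)ⁿ`, by induction on the number of blue balls (Pascal's rule followed
by AM-GM), and Hoeffding's lemma `1 - p + p eˣ ≤ e^{p x + x²/8}` then leaves `e^{-2t²n}`.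
-/

open Finset Real ProbabilityTheory MeasureTheory

lemma pow_mul_le_add_div_pow {y w : ℝ} (hy : 0 ≤ y) (hw : 0 ≤ w) (n : ℕ) :
    y ^ n * w ≤ ((n * y + w) / (n + 1)) ^ (n + 1) := by
  rcases hy.eq_or_lt with rfl | hy
  · rcases n with _ | n <;> simp
    positivity
  set a := (w - y) / ((n + 1) * y)
  have ha : -1 ≤ a := by
    rw [le_div_iff₀ (by positivity)]
    nlinarith
  calc y ^ n * w = y ^ (n + 1) * (1 + (n + 1 : ℕ) * a) := by
        simp only [a]; push_cast; field_simp; ring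
    _ ≤ y ^ (n + 1) * (1 + a) ^ (n + 1) := by
        gcongr; exact one_add_mul_le_pow (by linarith) _
    _ = ((n * y + w) / (n + 1)) ^ (n + 1) := by
        rw [← mul_pow]; congr 1; simp only [a]; field_simp; ring

lemma choose_mul_pow_add_choose_mul_pow_le (K n : ℕ) {y : ℝ} (hy : 0 ≤ y) :
    K.choose (n + 1) * y ^ (n + 1) + K.choose n * y ^ n ≤
      (K + 1).choose (n + 1) * ((K * y + 1) / (K + 1)) ^ (n + 1) := by
  rcases lt_or_ge K n with hKn | hnK
  · simp only [Nat.choose_eq_zero_of_lt hKn, Nat.choose_eq_zero_of_lt (hKn.trans n.lt_succ_self),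
      Nat.cast_zero, zero_mul, add_zero]
    positivity
  have h₁ : (K.choose n : ℝ) * (K + 1) = (K + 1).choose (n + 1) * (n + 1) := by
    exact_mod_cast (mul_comm _ _).trans (Nat.add_one_mul_choose_eq K n)
  have h₂ : (K.choose (n + 1) : ℝ) * (K + 1) = (K + 1).choose (n + 1) * (K - n) := by
    rw [← Nat.cast_sub hnK, ← Nat.add_sub_add_right K 1 n]
    exact_mod_cast Nat.choose_mul_succ_eq K (n + 1)
  set w := ((K - n) * y + (n + 1)) / (K + 1)
  have hw : 0 ≤ w := by
    have : (n : ℝ) ≤ K := by exact_mod_cast hnK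
    have : 0 ≤ ((K : ℝ) - n) * y := mul_nonneg (by linarith) hy
    positivity
  calc K.choose (n + 1) * y ^ (n + 1) + K.choose n * y ^ n
      = (K + 1).choose (n + 1) * (y ^ n * w) := by
        simp only [w]; field_simp; linear_combination y ^ (n + 1) * h₂ + y ^ n * h₁
    _ ≤ (K + 1).choose (n + 1) * ((n * y + w) / (n + 1)) ^ (n + 1) := by
        gcongr; exact pow_mul_le_add_div_pow hy hw n
    _ = (K + 1).choose (n + 1) * ((K * y + 1) / (K + 1)) ^ (n + 1) := by
        congr 2; simp only [w]; field_simp; ring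

lemma one_sub_add_mul_exp_le_exp {p : ℝ} (hp₀ : 0 ≤ p) (hp₁ : p ≤ 1) (x : ℝ) :
    1 - p + p * exp x ≤ exp (p * x + x ^ 2 / 8) := by
  let q : unitInterval := ⟨p, hp₀, hp₁⟩
  have h01 : ∀ᵐ ω ∂Ber((1 : ℝ), 0, q), ω ∈ Set.Icc (0 : ℝ) 1 := by
    rw [ae_iff]
    exact bernoulliMeasure_apply_of_notMem_of_notMem q (by measurability) (by simp) (by simp)
  have hoeffding := (hasSubgaussianMGF_of_mem_Icc aemeasurable_id h01).mgf_le x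
  simp only [mgf, integral_bernoulliMeasure, id] at hoeffding
  norm_num [q] at hoeffding
  have h₁ : exp (p * x) * exp (x * (1 - p)) = exp x := by rw [← exp_add]; ring_nf
  have h₂ : exp (p * x) * exp (-(x * p)) = 1 := by rw [← exp_add]; ring_nf; exact exp_zero
  calc 1 - p + p * exp x
      = exp (p * x) * (p * exp (x * (1 - p)) + (1 - p) * exp (-(x * p))) := by
        linear_combination (-p) * h₁ - (1 - p) * h₂
    _ ≤ exp (p * x) * exp (1 / 4 * x ^ 2 / 2) := by gcongr
    _ = exp (p * x + x ^ 2 / 8) := by rw [← exp_add]; ring_nf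

/-- `C(a+b,n)` times the probability generating function, at `s`, of the number of red balls in a
uniform sample of `n` balls from `a` red and `b` blue ones. -/
noncomputable def hypergeomPgfNum (a b n : ℕ) (s : ℝ) : ℝ :=
  ∑ ij ∈ antidiagonal n, (a.choose ij.1 * b.choose ij.2 : ℝ) * s ^ ij.1

section

variable (a b n : ℕ) (s : ℝ)

@[simp]
lemma hypergeomPgfNum_sample_zero : hypergeomPgfNum a b 0 s = 1 := by
  simp [hypergeomPgfNum]

lemma hypergeomPgfNum_blue_zero : hypergeomPgfNum a 0 n s = a.choose n * s ^ n := by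
  rw [hypergeomPgfNum, sum_eq_single_of_mem (n, 0) (by simp)]
  · simp
  · rintro ⟨i, _ | j⟩ hij hne
    · simp_all
    · simp

lemma hypergeomPgfNum_succ_succ :
    hypergeomPgfNum a (b + 1) (n + 1) s =
      hypergeomPgfNum a b (n + 1) s + hypergeomPgfNum a b n s := by
  simp only [hypergeomPgfNum, Nat.sum_antidiagonal_succ', Nat.choose_succ_succ',
    Nat.choose_zero_right]
  push_cast
  simp only [mul_add, add_mul, sum_add_distrib]
  ring

lemma hypergeomPgfNum_eq_sum_range :
    hypergeomPgfNum a b n s = ∑ i ∈ range (n + 1), (a.choose i * b.choose (n - i) : ℝ) * s ^ i :=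
  Nat.sum_antidiagonal_eq_sum_range_succ (fun i j => (a.choose i * b.choose j : ℝ) * s ^ i) n

end

theorem hypergeomPgfNum_le (a b n : ℕ) {s : ℝ} (hs : 0 ≤ s) :
    hypergeomPgfNum a b n s ≤ (a + b).choose n * (1 - a / (a + b) + a / (a + b) * s) ^ n := by
  induction b generalizing n with
  | zero =>
    rw [hypergeomPgfNum_blue_zero]
    rcases Nat.eq_zero_or_pos a with rfl | ha
    · cases n <;> simp
    · have : (a : ℝ) ≠ 0 := by exact_mod_cast ha.ne'
      simp [this]
  | succ b ih =>
    cases n with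
    | zero => simp
    | succ n =>
      set p : ℝ := a / (a + b)
      have hp : p ≤ 1 := div_le_one_of_le₀ (by simp) (by positivity)
      have hy : 0 ≤ 1 - p + p * s := by
        have : 0 ≤ p := by positivity
        nlinarith
      have hKy : ((a + b : ℕ) : ℝ) * (1 - p + p * s) = b + a * s := by
        rcases Nat.eq_zero_or_pos (a + b) with hab | hab
        · obtain ⟨rfl, rfl⟩ := Nat.add_eq_zero_iff.1 hab
          simp
        · have : (a : ℝ) + b ≠ 0 := by exact_mod_cast hab.ne'
          simp only [p]; push_cast; field_simp; ring
      calc hypergeomPgfNum a (b + 1) (n + 1) s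
          ≤ (a + b).choose (n + 1) * (1 - p + p * s) ^ (n + 1)
            + (a + b).choose n * (1 - p + p * s) ^ n := by
            rw [hypergeomPgfNum_succ_succ]; exact add_le_add (ih _) (ih _)
        _ ≤ (a + b + 1).choose (n + 1)
            * ((((a + b : ℕ) : ℝ) * (1 - p + p * s) + 1) / ((a + b : ℕ) + 1)) ^ (n + 1) :=
            choose_mul_pow_add_choose_mul_pow_le _ _ hy
        _ = _ := by
            rw [hKy]; push_cast; congr 2; field_simp; ring

theorem hypergeomPgfNum_exp_le (a b n : ℕ) (x : ℝ) :
    hypergeomPgfNum a b n (exp x) ≤ (a + b).choose n * exp (n * (a / (a + b) * x + x ^ 2 / 8)) := by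
  refine (hypergeomPgfNum_le a b n (exp_pos x).le).trans ?_
  rw [exp_nat_mul]
  have hp₀ : (0 : ℝ) ≤ a / (a + b) := by positivity
  have hp₁ : (a : ℝ) / (a + b) ≤ 1 := div_le_one_of_le₀ (by simp) (by positivity)
  gcongr
  exact one_sub_add_mul_exp_le_exp hp₀ hp₁ x

lemma sum_filter_le_exp_mul_sum {ι : Type*} (s : Finset ι) {f : ι → ℝ} (hf : ∀ i ∈ s, 0 ≤ f i)
    (X : ι → ℝ) (a : ℝ) {l : ℝ} (hl : 0 ≤ l) [DecidablePred fun i => X i ≤ a] :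
    ∑ i ∈ s with X i ≤ a, f i ≤ exp (l * a) * ∑ i ∈ s, f i * exp (-l * X i) := by
  rw [sum_filter, mul_sum]
  refine sum_le_sum fun i hi => ?_
  split_ifs with hXa
  · calc f i = f i * 1 := (mul_one _).symm
      _ ≤ f i * exp (l * (a - X i)) :=
          mul_le_mul_of_nonneg_left (one_le_exp (mul_nonneg hl (sub_nonneg.2 hXa))) (hf i hi)
      _ = exp (l * a) * (f i * exp (-l * X i)) := by
        rw [mul_left_comm, ← exp_add]; ring_nf
  · have := hf i hi; positivity

open Classical in
theorem hypergeom_lower_tail_expectation_general (N M n : ℕ) (hMN : M ≤ N) (t : ℝ) (ht : 0 ≤ t) :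
    ∑ i ∈ (Finset.range (n + 1)).filter
        (fun (i : ℕ) => (i : ℝ) ≤ (n : ℝ) * M / N - t * n),
        ((M.choose i * (N - M).choose (n - i) : ℝ) / (N.choose n : ℝ))
      ≤ Real.exp (-2 * t ^ 2 * n) := by
  obtain ⟨b, rfl⟩ := Nat.exists_eq_add_of_le hMN
  rw [Nat.add_sub_cancel_left]
  push_cast
  have hmgf : ∑ i ∈ range (n + 1), (M.choose i * b.choose (n - i) : ℝ) / (M + b).choose n
      * exp (-(4 * t) * i) ≤ exp (n * (M / (M + b) * -(4 * t) + (-(4 * t)) ^ 2 / 8)) := by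
    calc _ = hypergeomPgfNum M b n (exp (-(4 * t))) / (M + b).choose n := by
          rw [hypergeomPgfNum_eq_sum_range, sum_div]
          refine sum_congr rfl fun i _ => ?_
          rw [mul_comm (-(4 * t)), exp_nat_mul]
          ring
      _ ≤ _ := div_le_of_le_mul₀ (by positivity) (by positivity)
          ((hypergeomPgfNum_exp_le M b n _).trans_eq (mul_comm _ _))
  calc _ ≤ exp (4 * t * (n * M / (M + b) - t * n)) * ∑ i ∈ range (n + 1),
          (M.choose i * b.choose (n - i) : ℝ) / (M + b).choose n * exp (-(4 * t) * i) :=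
        sum_filter_le_exp_mul_sum _ (fun i _ => by positivity) _ _ (by positivity)
    _ ≤ exp (4 * t * (n * M / (M + b) - t * n)) *
          exp (n * (M / (M + b) * -(4 * t) + (-(4 * t)) ^ 2 / 8)) := by gcongr
    _ = exp (-2 * t ^ 2 * n) := by
        rw [← exp_add]; congr 1; ring

open Classical in
theorem hypergeom_lower_tail_expectation (N M n : ℕ) (hMN : M ≤ N) (hnN : n ≤ N)
    (hN : 0 < N) (hn : 0 < n) (t : ℝ) (ht : 0 ≤ t) :
    ∑ i ∈ (Finset.range (n + 1)).filter
        (fun (i : ℕ) => (i : ℝ) ≤ (n : ℝ) * M / N - t * n),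
        ((M.choose i * (N - M).choose (n - i) : ℝ) / (N.choose n : ℝ))
      ≤ Real.exp (-2 * t ^ 2 * n) :=
  hypergeom_lower_tail_expectation_general N M n hMN t ht
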